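/- A compact Hausdorff space X has the NTIP if ker(X) has the NTIP (X assumed non-scattered). -/

import Mathlib

open Classical Set

/-- `χ_H ∈ A`. -/
noncomputable def chiMem {X : Type*} [TopologicalSpace X]
    (A : Subalgebra ℂ C(X, ℂ)) (H : Set X) : Prop :=
  ∃ g ∈ A, ∀ x, g x = if x ∈ H then (1 : ℂ) else 0

/-- `X` has the non-trivial idempotent property: every closed subalgebra of `C(X, ℂ)`
separating points (and containing constants) contains a non-trivial idempotent `χ_H`,
for some clopen `H` with `∅ ⊊ H ⊊ X`. -/
noncomputable def NTIP (X : Type*) [TopologicalSpace X] : Prop :=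
  ∀ A : Subalgebra ℂ C(X, ℂ), IsClosed (A : Set C(X, ℂ)) → A.SeparatesPoints →
    ∃ H : Set X, IsClopen H ∧ H.Nonempty ∧ H ≠ Set.univ ∧ chiMem A H

/-!
Let `A ⊆ C(X, ℂ)` be closed and separate points. Restricting `A` to `K` and closing, the NTIP of
`K` yields some `f ∈ A` within `1/4` of a nontrivial indicator on `K`. The closed set
`D = f(X) \ (B(0, 1/4) ∪ B(1, 1/4))` has a preimage missing the perfect kernel, so `D` is
countable: a perfect part of `D` would lift, through a minimal closed preimage, to a perfect
subset of `X` outside `K`. Hence some circle `|z - 1| = r`, `1/4 < r < 3/4`, and a ray from it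
to `∞` avoid `f(X) = σ_{C(X)}(f)`. The circle thus lies in the unbounded component of the
complement of that spectrum, so it lies in the resolvent set of `f` in the closed subalgebra `A`,
and the Riesz projection `(2πi)⁻¹ ∮ (z - f)⁻¹ dz ∈ A` is the indicator of the clopen set
`f⁻¹(B(1, r))`.
-/

open Metric Complex Real Topology

section Scattered

variable {X Y : Type*} [TopologicalSpace X] [CompactSpace X] [TopologicalSpace Y]

theorem exists_minimal_isClosed_surjOn [T1Space Y] {f : X → Y} (hf : Continuous f) {P : Set Y}
    (hP : IsClosed P) (hPf : P ⊆ range f) :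
    ∃ M ⊆ f ⁻¹' P, Minimal (fun M ↦ IsClosed M ∧ SurjOn f M P) M := by
  refine zorn_superset_nonempty _ (fun c hcS hchain hcne ↦ ?_) _
    ⟨hP.preimage hf, fun y hy ↦ (hPf hy).imp fun x hx ↦ ⟨by simp [hx, hy], hx⟩⟩
  refine ⟨⋂₀ c, ⟨isClosed_sInter fun M hM ↦ (hcS hM).1, fun y hy ↦ ?_⟩,
    fun M hM ↦ sInter_subset_of_mem hM⟩
  have : Nonempty c := hcne.to_subtype
  have hfiber : (⋂ M : c, (M : Set X) ∩ f ⁻¹' {y}).Nonempty := by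
    refine IsCompact.nonempty_iInter_of_directed_nonempty_isCompact_isClosed _ ?_
      (fun M ↦ ?_) (fun M ↦ ?_) (fun M ↦ ?_)
    · intro M N
      rcases hchain.total M.2 N.2 with h | h
      · exact ⟨M, Subset.rfl, inter_subset_inter_left _ h⟩
      · exact ⟨N, inter_subset_inter_left _ h, Subset.rfl⟩
    · obtain ⟨x, hxM, hfx⟩ := (hcS M.2).2 hy
      exact ⟨x, hxM, hfx⟩
    · exact ((hcS M.2).1.inter (isClosed_singleton.preimage hf)).isCompact
    · exact (hcS M.2).1.inter (isClosed_singleton.preimage hf)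
  obtain ⟨x, hx⟩ := hfiber
  simp only [mem_iInter, mem_inter_iff, mem_preimage, mem_singleton_iff] at hx
  exact ⟨x, mem_sInter.mpr fun M hM ↦ (hx ⟨M, hM⟩).1, (hx ⟨_, hcne.some_mem⟩).2⟩

theorem Minimal.preperfect_of_surjOn [T2Space Y] {f : X → Y} (hf : Continuous f) {P : Set Y}
    (hP : Preperfect P) {M : Set X} (hM : Minimal (fun M ↦ IsClosed M ∧ SurjOn f M P) M) :
    Preperfect M := by
  -- If `q` were isolated in `M`, removing a neighbourhood of `q` from `M` would leave a closed
  -- set whose image misses from `P` only the point `f q`, which would then be isolated in `P`.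
  intro q hqM
  by_contra hq
  obtain ⟨U, hU, hUq⟩ : ∃ U ∈ 𝓝 q, ∀ y ∈ U ∩ M, y = q := by
    simpa [accPt_iff_nhds] using hq
  have hM' : IsClosed (M \ interior U) := hM.prop.1.sdiff isOpen_interior
  have hnot : ¬ SurjOn f (M \ interior U) P := fun hsurj ↦
    (hM.2 ⟨hM', hsurj⟩ sdiff_subset hqM).2 (mem_interior_iff_mem_nhds.mpr hU)
  have honly : ∀ y ∈ P, y ∉ f '' (M \ interior U) → y = f q := by
    intro y hy hyM'
    obtain ⟨x, hxM, rfl⟩ := hM.prop.2 hy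
    have hxU : x ∈ interior U := by_contra fun h ↦ hyM' ⟨x, ⟨hxM, h⟩, rfl⟩
    rw [hUq x ⟨interior_subset hxU, hxM⟩]
  obtain ⟨p₀, hp₀P, hp₀⟩ := not_subset.mp hnot
  have hW : (f '' (M \ interior U))ᶜ ∈ 𝓝 p₀ :=
    ((hM'.isCompact.image hf).isClosed.isOpen_compl).mem_nhds hp₀
  obtain ⟨y, ⟨hyW, hyP⟩, hyp₀⟩ := accPt_iff_nhds.mp (hP p₀ hp₀P) _ hW
  exact hyp₀ ((honly y hyP hyW).trans (honly p₀ hp₀P hp₀).symm)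

theorem IsClosed.countable_of_subset_range_of_disjoint_preimage [T2Space Y]
    [SecondCountableTopology Y] {K : Set X} (hK : ∀ P : Set X, Perfect P → P ⊆ K) {f : X → Y}
    (hf : Continuous f) {D : Set Y} (hD : IsClosed D) (hDf : D ⊆ range f)
    (hDK : Disjoint (f ⁻¹' D) K) : D.Countable := by
  obtain ⟨V, P, hV, hP, rfl⟩ := exists_countable_union_perfect_of_isClosed hD
  rcases P.eq_empty_or_nonempty with rfl | ⟨p, hp⟩
  · simpa using hV
  obtain ⟨M, hMP, hM⟩ :=
    exists_minimal_isClosed_surjOn hf hP.closed (subset_union_right.trans hDf)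
  obtain ⟨x, hxM, -⟩ := hM.prop.2 hp
  have hMK : M ⊆ K :=
    subset_closure.trans (hK _ (hM.preperfect_of_surjOn hf hP.acc).perfect_closure)
  exact (disjoint_left.mp hDK (Or.inr (hMP hxM)) (hMK hxM)).elim

end Scattered

section Geometry

theorem Set.Countable.exists_mem_Ioo_notMem {s : Set ℝ} (hs : s.Countable) {a b : ℝ}
    (hab : a < b) : ∃ x ∈ Ioo a b, x ∉ s :=
  let ⟨x, hxs, hx⟩ := (hs.dense_compl ℝ).exists_between hab
  ⟨x, hx, hxs⟩

theorem arg_circleMap_sub_center (c : ℂ) {t θ : ℝ} (ht : 0 < t) (hθ : θ ∈ Ioc (-π) π) :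
    arg (circleMap c t θ - c) = θ := by
  rw [circleMap_sub_center, circleMap_zero, exp_mul_I]
  exact_mod_cast arg_mul_cos_add_sin_mul_I ht hθ

theorem one_le_norm_circleMap_one {t θ : ℝ} (ht : 0 ≤ t) (hθ : 0 ≤ Real.cos θ) :
    1 ≤ ‖circleMap 1 t θ‖ := by
  have hre : (circleMap 1 t θ).re = 1 + t * Real.cos θ := by
    rw [← sub_add_cancel (circleMap 1 t θ) 1, circleMap_sub_center, add_re, circleMap_zero_re]
    simp [add_comm]
  have := re_le_norm (circleMap 1 t θ)
  nlinarith [mul_nonneg ht hθ]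

theorem not_isBounded_image_circleMap_Ici (c : ℂ) (r θ : ℝ) :
    ¬ Bornology.IsBounded ((fun t ↦ circleMap c t θ) '' Ici r) := by
  intro h
  obtain ⟨C, hC⟩ := isBounded_iff_forall_norm_le.mp h
  set t := max r (C + ‖c‖ + 1)
  have h₁ := hC _ (mem_image_of_mem _ (le_max_left r (C + ‖c‖ + 1)))
  have h₂ : ‖circleMap c t θ - c‖ = |t| := by rw [circleMap_sub_center, norm_circleMap_zero]
  have h₃ := norm_sub_le (circleMap c t θ) c
  have h₄ : C + ‖c‖ + 1 ≤ |t| := (le_max_right _ _).trans (le_abs_self t)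
  linarith

theorem sphere_one_subset_compl {S D : Set ℂ} {ε r : ℝ} (hS : S ⊆ ball 0 ε ∪ ball 1 ε ∪ D)
    (hr : r ∈ Ioo ε (1 - ε)) (hrD : r ∉ (fun d ↦ dist d 1) '' D) : sphere (1 : ℂ) r ⊆ Sᶜ := by
  intro z hz hzS
  rw [mem_sphere] at hz
  rcases hS hzS with (h₀ | h₁) | hd
  · have := dist_triangle_left (1 : ℂ) 0 z
    rw [mem_ball_zero_iff] at h₀
    norm_num at this
    linarith [hr.2]
  · rw [mem_ball] at h₁
    linarith [hr.1]
  · exact hrD ⟨z, hd, hz⟩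

theorem image_circleMap_one_Ici_subset_compl {S D : Set ℂ} {ε r θ : ℝ}
    (hS : S ⊆ ball 0 ε ∪ ball 1 ε ∪ D) (hε₀ : 0 ≤ ε) (hε₁ : ε < 1) (hr : ε < r)
    (hθ : θ ∈ Ioo (-(π / 2)) (π / 2)) (hθD : θ ∉ (fun d ↦ arg (d - 1)) '' D) :
    (fun t ↦ circleMap 1 t θ) '' Ici r ⊆ Sᶜ := by
  rintro _ ⟨t, ht, rfl⟩ hzS
  have ht₀ : 0 < t := hε₀.trans_lt (hr.trans_le ht)
  rcases hS hzS with (h₀ | h₁) | hd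
  · have := one_le_norm_circleMap_one ht₀.le (Real.cos_nonneg_of_mem_Icc (Ioo_subset_Icc_self hθ))
    rw [mem_ball, dist_zero_right] at h₀
    linarith
  · rw [mem_ball, dist_eq_norm, circleMap_sub_center, norm_circleMap_zero, abs_of_pos ht₀] at h₁
    linarith [mem_Ici.mp ht]
  · exact hθD ⟨_, hd, arg_circleMap_sub_center 1 ht₀
      ⟨by linarith [hθ.1, pi_pos], by linarith [hθ.2, pi_pos]⟩⟩

theorem exists_sphere_forall_not_isBounded_connectedComponentIn {S D : Set ℂ} {ε : ℝ}
    (hε : 0 < ε) (hε₁ : ε < 1 / 2) (hD : D.Countable) (hS : S ⊆ ball 0 ε ∪ ball 1 ε ∪ D) :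
    ∃ r ∈ Ioo ε (1 - ε), ∀ z ∈ sphere (1 : ℂ) r,
      ¬ Bornology.IsBounded (connectedComponentIn Sᶜ z) := by
  obtain ⟨r, hr, hrD⟩ :=
    (hD.image fun d ↦ dist d 1).exists_mem_Ioo_notMem (by linarith : ε < 1 - ε)
  obtain ⟨θ, hθ, hθD⟩ :=
    (hD.image fun d ↦ arg (d - 1)).exists_mem_Ioo_notMem (by linarith [pi_pos] : -(π / 2) < π / 2)
  have hr₀ : 0 < r := hε.trans hr.1
  have havoid : sphere (1 : ℂ) r ∪ (fun t ↦ circleMap 1 t θ) '' Ici r ⊆ Sᶜ :=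
    union_subset (sphere_one_subset_compl hS hr hrD)
      (image_circleMap_one_Ici_subset_compl hS hε.le (by linarith) hr.1 hθ hθD)
  have hconn : IsPreconnected (sphere (1 : ℂ) r ∪ (fun t ↦ circleMap 1 t θ) '' Ici r) :=
    (isPreconnected_sphere (by simp [rank_real_complex]) 1 r).union (circleMap 1 r θ)
      (circleMap_mem_sphere 1 hr₀.le θ) ⟨r, mem_Ici.mpr le_rfl, rfl⟩
      (isPreconnected_Ici.image _ (by unfold circleMap; fun_prop))
  refine ⟨r, hr, fun z hz hbdd ↦ not_isBounded_image_circleMap_Ici 1 r θ ?_⟩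
  exact hbdd.subset <| subset_union_right.trans <|
    hconn.subset_connectedComponentIn (Or.inl hz) havoid

end Geometry

theorem Subalgebra.SeparatesPoints.map_compRightAlgHom {R 𝕜 X Y : Type*} [CommSemiring R]
    [Semiring 𝕜] [Algebra R 𝕜] [TopologicalSpace 𝕜] [IsTopologicalSemiring 𝕜]
    [TopologicalSpace X] [TopologicalSpace Y] {A : Subalgebra R C(X, 𝕜)} (hA : A.SeparatesPoints)
    {g : C(Y, X)} (hg : Function.Injective g) :
    (A.map (ContinuousMap.compRightAlgHom R 𝕜 g)).SeparatesPoints := by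
  intro x y hxy
  obtain ⟨_, ⟨f, hfA, rfl⟩, hf⟩ := hA (hg.ne hxy)
  exact ⟨_, ⟨_, Subalgebra.mem_map.mpr ⟨f, hfA, rfl⟩, rfl⟩, hf⟩

theorem NTIP.exists_mem_approx_nontrivial_indicator {X : Type*} [TopologicalSpace X]
    {K : Set X} [CompactSpace K] (hK : NTIP K) {A : Subalgebra ℂ C(X, ℂ)}
    (hA : A.SeparatesPoints) {ε : ℝ} (hε : 0 < ε) :
    ∃ f ∈ A, (∀ x ∈ K, f x ∈ ball 0 ε ∪ ball 1 ε) ∧ (∃ x ∈ K, f x ∈ ball 0 ε) ∧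
      ∃ x ∈ K, f x ∈ ball 1 ε := by
  set restrict := ContinuousMap.compRightAlgHom ℂ ℂ ⟨((↑) : K → X), continuous_subtype_val⟩
  obtain ⟨H, -, ⟨k₁, hk₁⟩, hHuniv, g, hgB, hg⟩ := hK _
    (A.map restrict).isClosed_topologicalClosure
    (Subalgebra.separatesPoints_monotone (A.map restrict).le_topologicalClosure
      (hA.map_compRightAlgHom Subtype.val_injective))
  obtain ⟨k₀, hk₀⟩ := (ne_univ_iff_exists_notMem H).mp hHuniv
  rw [← SetLike.mem_coe, Subalgebra.topologicalClosure_coe] at hgB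
  obtain ⟨_, ⟨f, hfA, rfl⟩, hfg⟩ := Metric.mem_closure_iff.mp hgB ε hε
  have hf : ∀ k : K, dist (f k) (if k ∈ H then 1 else 0) < ε := fun k ↦ by
    rw [← hg k, dist_comm]
    exact (ContinuousMap.dist_apply_le_dist k).trans_lt hfg
  refine ⟨f, hfA, fun x hx ↦ ?_, ⟨k₀, k₀.2, by simpa [hk₀] using hf k₀⟩,
    ⟨k₁, k₁.2, by simpa [hk₁] using hf k₁⟩⟩
  have := hf ⟨x, hx⟩
  split_ifs at this
  exacts [Or.inr this, Or.inl this]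

theorem isClopen_preimage_ball {X Y : Type*} [TopologicalSpace X] [PseudoMetricSpace Y] {f : X → Y}
    (hf : Continuous f) {c : Y} {r : ℝ} (h : ∀ x, f x ∉ sphere c r) :
    IsClopen (f ⁻¹' ball c r) := by
  have hball : f ⁻¹' ball c r = f ⁻¹' closedBall c r := by
    ext x
    simp only [mem_preimage, ← ball_union_sphere, mem_union, h x, or_false]
  exact ⟨hball ▸ isClosed_closedBall.preimage hf, isOpen_ball.preimage hf⟩

theorem circleIntegral.integral_sub_inv_of_notMem_closedBall {c w : ℂ} {R : ℝ} (hR : 0 ≤ R)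
    (hw : w ∉ closedBall c R) : (∮ z in C(c, R), (z - w)⁻¹) = 0 := by
  have hne : ∀ z ∈ closedBall c R, z - w ≠ 0 := fun z hz h ↦ hw (sub_eq_zero.mp h ▸ hz)
  exact circleIntegral_eq_zero_of_differentiable_on_off_countable hR countable_empty
    ((continuous_id.sub continuous_const).continuousOn.inv₀ hne)
    fun z hz ↦ (differentiableAt_id.sub_const w).inv (hne z (ball_subset_closedBall hz.1))

section Resolvent

variable {X : Type*} [TopologicalSpace X] {A : Subalgebra ℂ C(X, ℂ)}

theorem Subalgebra.coe_resolvent_apply {f : A} {z : ℂ} (hz : z ∈ resolventSet ℂ f) (x : X) :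
    ((resolvent f z : A) : C(X, ℂ)) x = (z - (f : C(X, ℂ)) x)⁻¹ := by
  have h := congr(((($(Ring.mul_inverse_cancel _ (spectrum.mem_resolventSet_iff.mp hz)) : A)) :
    C(X, ℂ)) x)
  simp only [MulMemClass.coe_mul, AddSubgroupClass.coe_sub, SubalgebraClass.coe_algebraMap,
    ContinuousMap.mul_apply, ContinuousMap.sub_apply, _root_.algebraMap_apply, smul_eq_mul,
    mul_one, OneMemClass.coe_one, ContinuousMap.one_apply] at h
  exact eq_inv_of_mul_eq_one_right h

theorem Subalgebra.apply_notMem_resolventSet (f : A) (x : X) :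
    (f : C(X, ℂ)) x ∉ resolventSet ℂ f :=
  spectrum.subset_subalgebra f (by rw [ContinuousMap.spectrum_eq_range]; exact mem_range_self x)

variable [CompactSpace X]

theorem Subalgebra.mem_resolventSet_of_not_isBounded (hA : IsClosed (A : Set C(X, ℂ))) (f : A)
    {z : ℂ} (hz : ¬ Bornology.IsBounded (connectedComponentIn (range (f : C(X, ℂ)))ᶜ z)) :
    z ∈ resolventSet ℂ f := by
  by_contra hσ
  rw [← ContinuousMap.spectrum_eq_range (𝕜 := ℂ)] at hz
  exact hz (Subalgebra.spectrum_isBounded_connectedComponentIn A f hσ)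

theorem Subalgebra.exists_mem_apply_eq_circleIntegral (hA : IsClosed (A : Set C(X, ℂ))) (f : A)
    {c : ℂ} {r : ℝ} (hr : 0 ≤ r) (hρ : sphere c r ⊆ resolventSet ℂ f) :
    ∃ e ∈ A, ∀ x, e x = ∮ z in C(c, r), (z - (f : C(X, ℂ)) x)⁻¹ := by
  have : CompleteSpace A := hA.completeSpace_coe
  have hint : CircleIntegrable (resolvent f) c r :=
    ContinuousOn.circleIntegrable hr fun z hz ↦
      (spectrum.hasDerivAt_resolvent_const_left (hρ hz)).continuousAt.continuousWithinAt
  refine ⟨(∮ z in C(c, r), resolvent f z : A), Subtype.prop _, fun x ↦ ?_⟩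
  let Φ : A →L[ℂ] ℂ := (ContinuousMap.evalCLM ℂ x).comp (Subalgebra.toSubmodule A).subtypeL
  change Φ (∮ z in C(c, r), resolvent f z) = _
  rw [circleIntegral, circleIntegral, ← Φ.intervalIntegral_comp_comm hint.out]
  refine intervalIntegral.integral_congr fun θ _ ↦ ?_
  simp only [map_smul]
  exact congr_arg _ (coe_resolvent_apply (hρ (circleMap_mem_sphere c hr θ)) x)

theorem Subalgebra.chiMem_preimage_ball (hA : IsClosed (A : Set C(X, ℂ))) (f : A) {c : ℂ}
    {r : ℝ} (hr : 0 ≤ r) (hρ : sphere c r ⊆ resolventSet ℂ f) :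
    chiMem A ((f : C(X, ℂ)) ⁻¹' ball c r) := by
  obtain ⟨e, heA, he⟩ := exists_mem_apply_eq_circleIntegral hA f hr hρ
  refine ⟨(2 * π * I)⁻¹ • e, A.smul_mem heA _, fun x ↦ ?_⟩
  rw [ContinuousMap.smul_apply, he, smul_eq_mul]
  split_ifs with hx
  · rw [circleIntegral.integral_sub_inv_of_mem_ball hx, inv_mul_cancel₀ two_pi_I_ne_zero]
  · have hx' : (f : C(X, ℂ)) x ∉ closedBall c r := by
      rw [← ball_union_sphere]
      exact not_or.mpr ⟨hx, fun h ↦ apply_notMem_resolventSet f x (hρ h)⟩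
    rw [circleIntegral.integral_sub_inv_of_notMem_closedBall hr hx', mul_zero]

end Resolvent

theorem stmt11_general {X : Type*} [TopologicalSpace X] [CompactSpace X]
    (K : Set X) (hKperf : Perfect K)
    (hKmax : ∀ P : Set X, Perfect P → P ⊆ K)
    (hK : NTIP K) : NTIP X := by
  intro A hA hsep
  have : CompactSpace K := isCompact_iff_compactSpace.mp hKperf.closed.isCompact
  obtain ⟨f, hfA, hfK, ⟨x₀, -, hx₀⟩, ⟨x₁, -, hx₁⟩⟩ :=
    hK.exists_mem_approx_nontrivial_indicator hsep (ε := 4⁻¹) (by norm_num)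
  have hD : (range f \ (ball 0 4⁻¹ ∪ ball 1 4⁻¹)).Countable :=
    ((isCompact_range f.continuous).isClosed.sdiff (isOpen_ball.union isOpen_ball))
      |>.countable_of_subset_range_of_disjoint_preimage hKmax f.continuous sdiff_subset
        (disjoint_left.mpr fun x hx hxK ↦ hx.2 (hfK x hxK))
  obtain ⟨r, hr, hunb⟩ := exists_sphere_forall_not_isBounded_connectedComponentIn
    (by norm_num) (by norm_num) hD le_sup_sdiff
  have hρ : sphere 1 r ⊆ resolventSet ℂ (⟨f, hfA⟩ : A) := fun z hz ↦
    Subalgebra.mem_resolventSet_of_not_isBounded hA _ (hunb z hz)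
  refine ⟨f ⁻¹' ball 1 r, isClopen_preimage_ball f.continuous fun x hx ↦
      Subalgebra.apply_notMem_resolventSet ⟨f, hfA⟩ x (hρ hx),
    ⟨x₁, ball_subset_ball hr.1.le hx₁⟩,
    (ne_univ_iff_exists_notMem _).mpr ⟨x₀, disjoint_left.mp (ball_disjoint_ball ?_) hx₀⟩,
    Subalgebra.chiMem_preimage_ball hA ⟨f, hfA⟩ (by linarith [hr.1]) hρ⟩
  norm_num
  linarith [hr.2]

/-- If `X` is compact Hausdorff and non-scattered with perfect kernel `K = ker X`
(the largest perfect subset, nonempty), and `K` has the NTIP, then `X` has the NTIP. -/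
theorem stmt11 {X : Type*} [TopologicalSpace X] [CompactSpace X] [T2Space X]
    (K : Set X) (hKperf : Perfect K) (hKne : K.Nonempty)
    (hKmax : ∀ P : Set X, Perfect P → P ⊆ K)
    (hK : NTIP K) : NTIP X :=
  stmt11_general K hKperf hKmax hK
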